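/- arXiv:2111.11259 — 2 statements merged into one kernel-verified Lean document; each statement's English description precedes it below -/
import Mathlib

section
/- For probability measures μ, ν on ℝ with finite first moments, the 1-Wasserstein distance equals the L¹ distance of the quantile functions: W₁(μ,ν) = ∫₀¹ |F_μ^{[-1]}(p) − F_ν^{[-1]}(p)| dp, where F^{[-1]}(p) = inf{x : p ≤ F(x)} is the generalized inverse of the CDF. -/
/-!
The quantile map pushes the uniform law on `(0, 1)` forward to `μ`, so `(F_μ⁻¹(U), F_ν⁻¹(U))`
is a coupling whose cost is the right-hand side. Conversely, for any coupling `(X, Y)`,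
`|X - Y| = ∫ |𝟙[X ≤ t] - 𝟙[Y ≤ t]| dt`, and taking expectations (Fubini) gives
`E|X - Y| ≥ ∫ |F_μ(t) - F_ν(t)| dt`. Finally `∫ |F_μ - F_ν| dt = ∫₀¹ |F_μ⁻¹ - F_ν⁻¹| dp`, both
being the area between the graphs of `F_μ` and `F_ν`, since `F_μ⁻¹(p) ≤ x ↔ p ≤ F_μ(x)`.
-/

open MeasureTheory Set

noncomputable def W1 (μ ν : Measure ℝ) : ℝ :=
  ⨅ π : {π : Measure (ℝ × ℝ) // π.map Prod.fst = μ ∧ π.map Prod.snd = ν},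
    ∫ p, |p.1 - p.2| ∂(π.1)

/-- Generalized inverse (quantile function) of the CDF of `μ`. -/
noncomputable def quantile (μ : Measure ℝ) (p : ℝ) : ℝ :=
  sInf {x : ℝ | p ≤ (μ (Iic x)).toReal}

open ProbabilityTheory Filter Topology
open scoped symmDiff

namespace Set

variable {α : Type*} [LinearOrder α] (a b : α)

lemma Iic_symmDiff_Iic : Iic a ∆ Iic b = uIoc a b := by
  ext x; simp only [mem_symmDiff, mem_Iic, mem_uIoc]; grind

lemma Ici_symmDiff_Ici : Ici a ∆ Ici b = Ico (min a b) (max a b) := by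
  ext x; simp only [mem_symmDiff, mem_Ici, mem_Ico, min_le_iff, lt_max_iff]; grind

end Set

lemma volume_Ici_symmDiff_Ici (a b : ℝ) : volume (Ici a ∆ Ici b) = ENNReal.ofReal |a - b| := by
  rw [Ici_symmDiff_Ici, Real.volume_Ico, max_sub_min_eq_abs']

namespace ProbabilityTheory

section Quantile

variable (μ : Measure ℝ) {p : ℝ}

lemma nonempty_setOf_le_cdf (hp : p < 1) : {x | p ≤ cdf μ x}.Nonempty :=
  (((tendsto_cdf_atTop μ).eventually (lt_mem_nhds hp)).exists).imp fun _ ↦ le_of_lt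

lemma bddBelow_setOf_le_cdf (hp : 0 < p) : BddBelow {x | p ≤ cdf μ x} := by
  obtain ⟨x₀, hx₀⟩ := ((tendsto_cdf_atBot μ).eventually (gt_mem_nhds hp)).exists
  exact ⟨x₀, fun y hy ↦ le_of_not_gt fun hyx ↦
    (hy.trans (monotone_cdf μ hyx.le)).not_gt hx₀⟩

variable [IsProbabilityMeasure μ]

lemma quantile_eq_sInf_cdf (p : ℝ) : quantile μ p = sInf {x | p ≤ cdf μ x} := by
  simp_rw [quantile, cdf_eq_real, measureReal_def]

lemma le_cdf_quantile (hp : p ∈ Ioo 0 1) : p ≤ cdf μ (quantile μ p) := by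
  rw [quantile_eq_sInf_cdf]
  refine ge_of_tendsto (((cdf μ).right_continuous _).mono_left
    (nhdsWithin_mono _ Ioi_subset_Ici_self)) ?_
  filter_upwards [self_mem_nhdsWithin] with y hy
  obtain ⟨x, hx, hxy⟩ := exists_lt_of_csInf_lt (nonempty_setOf_le_cdf μ hp.2) hy
  exact hx.trans (monotone_cdf μ hxy.le)

lemma quantile_le_iff (hp : p ∈ Ioo 0 1) {x : ℝ} : quantile μ p ≤ x ↔ p ≤ cdf μ x :=
  ⟨fun h ↦ (le_cdf_quantile μ hp).trans (monotone_cdf μ h),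
    fun h ↦ (quantile_eq_sInf_cdf μ p).trans_le (csInf_le (bddBelow_setOf_le_cdf μ hp.1) h)⟩

lemma monotoneOn_quantile : MonotoneOn (quantile μ) (Ioo 0 1) := fun p hp q hq hpq ↦ by
  simp only [quantile_eq_sInf_cdf]
  exact csInf_le_csInf (bddBelow_setOf_le_cdf μ hp.1) (nonempty_setOf_le_cdf μ hq.2)
    fun x hx ↦ hpq.trans hx

lemma aemeasurable_quantile : AEMeasurable (quantile μ) (volume.restrict (Ioo 0 1)) :=
  aemeasurable_restrict_of_monotoneOn measurableSet_Ioo (monotoneOn_quantile μ)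

lemma map_quantile : (volume.restrict (Ioo 0 1)).map (quantile μ) = μ := by
  have : IsFiniteMeasure (volume.restrict (Ioo (0 : ℝ) 1)) :=
    isFiniteMeasure_restrict.2 (by simp)
  refine Measure.ext_of_Iic _ _ fun x ↦ ?_
  have hpre : quantile μ ⁻¹' Iic x ∩ Ioo 0 1 = Iic (cdf μ x) ∩ Ioo 0 1 := by
    ext p
    simp only [mem_inter_iff, mem_preimage, mem_Iic, and_congr_left_iff]
    exact fun hp ↦ quantile_le_iff μ hp
  rw [Measure.map_apply_of_aemeasurable (aemeasurable_quantile μ) measurableSet_Iic,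
    Measure.restrict_apply' measurableSet_Ioo, hpre, ← Measure.restrict_apply' measurableSet_Ioo,
    Measure.restrict_congr_set Ioo_ae_eq_Ioc, Measure.restrict_apply measurableSet_Iic,
    Iic_inter_Ioc_of_le (cdf_le_one μ x), Real.volume_Ioc, sub_zero, ofReal_cdf]

end Quantile

section Coupling

lemma integrable_abs_sub_of_map {μ ν : Measure ℝ} {π : Measure (ℝ × ℝ)}
    (hπμ : π.map Prod.fst = μ) (hπν : π.map Prod.snd = ν)
    (hμ : Integrable (fun x ↦ x) μ) (hν : Integrable (fun x ↦ x) ν) :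
    Integrable (fun q : ℝ × ℝ ↦ |q.1 - q.2|) π :=
  (((hπμ ▸ hμ).comp_measurable measurable_fst).sub
    ((hπν ▸ hν).comp_measurable measurable_snd)).abs

variable (μ ν : Measure ℝ) [IsProbabilityMeasure μ] [IsProbabilityMeasure ν]

lemma lintegral_abs_quantile_sub_eq :
    ∫⁻ p in Ioo 0 1, ENNReal.ofReal |quantile μ p - quantile ν p| =
      ∫⁻ t, ENNReal.ofReal |cdf μ t - cdf ν t| := by
  set between : Set (ℝ × ℝ) := {q | q.2 ≤ cdf μ q.1} ∆ {q | q.2 ≤ cdf ν q.1}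
  have hmeas : MeasurableSet between :=
    (measurableSet_le measurable_snd ((monotone_cdf μ).measurable.comp measurable_fst)).symmDiff
      (measurableSet_le measurable_snd ((monotone_cdf ν).measurable.comp measurable_fst))
  have hvertical : ∀ t, volume.restrict (Ioo 0 1) (Prod.mk t ⁻¹' between) =
      ENNReal.ofReal |cdf μ t - cdf ν t| := fun t ↦ by
    have hsub : uIoc (cdf μ t) (cdf ν t) ⊆ Ioc 0 1 :=
      Ioc_subset_Ioc (le_min (cdf_nonneg μ t) (cdf_nonneg ν t))
        (max_le (cdf_le_one μ t) (cdf_le_one ν t))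
    rw [show Prod.mk t ⁻¹' between = Iic (cdf μ t) ∆ Iic (cdf ν t) from rfl,
      Iic_symmDiff_Iic, Measure.restrict_congr_set Ioo_ae_eq_Ioc,
      Measure.restrict_apply measurableSet_uIoc, inter_eq_left.2 hsub, Real.volume_uIoc, abs_sub_comm]
  have hhorizontal : ∀ p ∈ Ioo (0 : ℝ) 1, volume ((fun t ↦ (t, p)) ⁻¹' between) =
      ENNReal.ofReal |quantile μ p - quantile ν p| := fun p hp ↦ by
    have hsection :
        (fun t ↦ (t, p)) ⁻¹' between = Ici (quantile μ p) ∆ Ici (quantile ν p) := by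
      ext t
      simp only [between, preimage_symmDiff, mem_symmDiff, mem_preimage, mem_ofPred_eq, mem_Ici,
        quantile_le_iff _ hp]
    rw [hsection, volume_Ici_symmDiff_Ici]
  calc ∫⁻ p in Ioo 0 1, ENNReal.ofReal |quantile μ p - quantile ν p|
      = ∫⁻ p in Ioo 0 1, volume ((fun t ↦ (t, p)) ⁻¹' between) :=
        (setLIntegral_congr_fun measurableSet_Ioo hhorizontal).symm
    _ = (volume.prod (volume.restrict (Ioo 0 1))) between := (Measure.prod_apply_symm hmeas).symm
    _ = ∫⁻ t, ENNReal.ofReal |cdf μ t - cdf ν t| := by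
        simp only [Measure.prod_apply hmeas, hvertical]

variable {μ ν} in
lemma lintegral_abs_cdf_sub_le {π : Measure (ℝ × ℝ)} (hπμ : π.map Prod.fst = μ)
    (hπν : π.map Prod.snd = ν) :
    ∫⁻ t, ENNReal.ofReal |cdf μ t - cdf ν t| ≤
      ∫⁻ q, ENNReal.ofReal |q.1 - q.2| ∂π := by
  have : IsProbabilityMeasure (π.map Prod.fst) := hπμ ▸ ‹_›
  have : IsProbabilityMeasure π := Measure.isProbabilityMeasure_of_map Prod.fst
  set below : Set ((ℝ × ℝ) × ℝ) := {x | x.1.1 ≤ x.2} ∆ {x | x.1.2 ≤ x.2}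
  have hmeas : MeasurableSet below :=
    (measurableSet_le (measurable_fst.comp measurable_fst) measurable_snd).symmDiff
      (measurableSet_le (measurable_snd.comp measurable_fst) measurable_snd)
  have hcdf : ∀ t,
      ENNReal.ofReal |cdf μ t - cdf ν t| ≤ π ((fun q ↦ (q, t)) ⁻¹' below) := fun t ↦ by
    have hμt : cdf μ t = π.real {q | q.1 ≤ t} := by
      rw [cdf_eq_real, ← hπμ, map_measureReal_apply measurable_fst measurableSet_Iic]; rfl
    have hνt : cdf ν t = π.real {q | q.2 ≤ t} := by
      rw [cdf_eq_real, ← hπν, map_measureReal_apply measurable_snd measurableSet_Iic]; rfl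
    rw [hμt, hνt, ← ofReal_measureReal]
    exact ENNReal.ofReal_le_ofReal (abs_measureReal_sub_le_measureReal_symmDiff
      (measurableSet_le measurable_fst measurable_const).nullMeasurableSet
      (measurableSet_le measurable_snd measurable_const).nullMeasurableSet)
  calc ∫⁻ t, ENNReal.ofReal |cdf μ t - cdf ν t|
      ≤ ∫⁻ t, π ((fun q ↦ (q, t)) ⁻¹' below) := lintegral_mono hcdf
    _ = (π.prod volume) below := (Measure.prod_apply_symm hmeas).symm
    _ = ∫⁻ q, ENNReal.ofReal |q.1 - q.2| ∂π := by
        rw [Measure.prod_apply hmeas]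
        exact lintegral_congr fun q ↦ volume_Ici_symmDiff_Ici q.1 q.2

/-- The comonotone coupling: the joint law of `(quantile μ U, quantile ν U)` for `U` uniform
on `(0, 1)`. -/
noncomputable def quantileCoupling : Measure (ℝ × ℝ) :=
  (volume.restrict (Ioo 0 1)).map fun p ↦ (quantile μ p, quantile ν p)

lemma aemeasurable_quantile_prod :
    AEMeasurable (fun p ↦ (quantile μ p, quantile ν p)) (volume.restrict (Ioo 0 1)) :=
  (aemeasurable_quantile μ).prodMk (aemeasurable_quantile ν)

lemma quantileCoupling_map_fst : (quantileCoupling μ ν).map Prod.fst = μ := by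
  rw [quantileCoupling, AEMeasurable.map_map_of_aemeasurable measurable_fst.aemeasurable
    (aemeasurable_quantile_prod μ ν)]
  exact map_quantile μ

lemma quantileCoupling_map_snd : (quantileCoupling μ ν).map Prod.snd = ν := by
  rw [quantileCoupling, AEMeasurable.map_map_of_aemeasurable measurable_snd.aemeasurable
    (aemeasurable_quantile_prod μ ν)]
  exact map_quantile ν

lemma integral_abs_sub_quantileCoupling :
    ∫ q, |q.1 - q.2| ∂quantileCoupling μ ν =
      ∫ p in Ioo 0 1, |quantile μ p - quantile ν p| :=
  integral_map (aemeasurable_quantile_prod μ ν)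
    (measurable_fst.sub measurable_snd).abs.aestronglyMeasurable

variable {μ ν}

lemma integral_abs_quantile_sub_le {π : Measure (ℝ × ℝ)} (hπμ : π.map Prod.fst = μ)
    (hπν : π.map Prod.snd = ν) (hint : Integrable (fun q : ℝ × ℝ ↦ |q.1 - q.2|) π) :
    ∫ p in Ioo 0 1, |quantile μ p - quantile ν p| ≤ ∫ q, |q.1 - q.2| ∂π := by
  rw [integral_eq_lintegral_of_nonneg_ae (f := fun p ↦ |quantile μ p - quantile ν p|)
    (ae_of_all _ fun _ ↦ abs_nonneg _)
    ((aemeasurable_quantile μ).sub (aemeasurable_quantile ν)).abs.aestronglyMeasurable]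
  refine ENNReal.toReal_le_of_le_ofReal (integral_nonneg fun _ ↦ abs_nonneg _) ?_
  rw [ofReal_integral_eq_lintegral_ofReal hint (ae_of_all _ fun _ ↦ abs_nonneg _),
    lintegral_abs_quantile_sub_eq]
  exact lintegral_abs_cdf_sub_le hπμ hπν

end Coupling

end ProbabilityTheory

open ProbabilityTheory in
theorem stmt3 (μ ν : Measure ℝ) [IsProbabilityMeasure μ] [IsProbabilityMeasure ν]
    (hμ : Integrable (fun x => x) μ) (hν : Integrable (fun x => x) ν) :
    W1 μ ν = ∫ p in Ioo (0:ℝ) 1, |quantile μ p - quantile ν p| := by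
  have hbdd : BddBelow (range fun π : {π : Measure (ℝ × ℝ) //
      π.map Prod.fst = μ ∧ π.map Prod.snd = ν} ↦ ∫ q, |q.1 - q.2| ∂π.1) :=
    ⟨0, forall_mem_range.2 fun _ ↦ integral_nonneg fun _ ↦ abs_nonneg _⟩
  have : Nonempty {π : Measure (ℝ × ℝ) // π.map Prod.fst = μ ∧ π.map Prod.snd = ν} :=
    ⟨⟨_, quantileCoupling_map_fst μ ν, quantileCoupling_map_snd μ ν⟩⟩
  refine le_antisymm ?_ (le_ciInf fun ⟨π, hπμ, hπν⟩ ↦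
    integral_abs_quantile_sub_le hπμ hπν (integrable_abs_sub_of_map hπμ hπν hμ hν))
  calc W1 μ ν ≤ ∫ q, |q.1 - q.2| ∂quantileCoupling μ ν :=
        ciInf_le hbdd ⟨_, quantileCoupling_map_fst μ ν, quantileCoupling_map_snd μ ν⟩
    _ = _ := integral_abs_sub_quantileCoupling μ ν
end

section
/- Let X_ε → X in L¹(P), with all laws supported in a common compact set U ⊂ ℝⁿ, G ∈ {0,1} with P(G=k)>0, and f continuous and bounded on U. If W₁(law(X_ε|G=0), law(X_ε|G=1)) → 0 as ε → 0⁺, then W₁(law(f(X_ε)|G=0), law(f(X_ε)|G=1)) → 0 and W₁(law(f(X)|G=0), law(f(X)|G=1)) = 0. -/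
open MeasureTheory ProbabilityTheory Set Filter Topology

noncomputable def W1E {E : Type*} [MeasurableSpace E] [MetricSpace E]
    (μ ν : Measure E) : ℝ :=
  ⨅ π : {π : Measure (E × E) // π.map Prod.fst = μ ∧ π.map Prod.snd = ν},
    ∫ p, dist p.1 p.2 ∂(π.1)

/-! On a compact set `U` a continuous `g` is, for every `η > 0`, "Lipschitz up to `η`":
`|g x - g y| ≤ η + K_η * dist x y`. Pushing a coupling forward by `g` therefore gives
`W₁(g_*μ, g_*ν) ≤ η + K_η * W₁(μ, ν)` for laws carried by `U`, which is the first claim.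
For the second, the coupling `(X, X_ε)` under `P(· | G = k)` puts the law of `X` given `G = k`
within `W₁`-distance `P(G = k)⁻¹ * E[dist(X_ε, X)]` of that of `X_ε`. Testing against a bounded
continuous `g`, the chain law(X | 0) → law(X_ε | 0) → law(X_ε | 1) → law(X | 1) shows that
`∫ g` agrees under the two conditional laws of `X`, so these laws coincide, and so do those of
`f(X)`. -/

lemma W1_eq_W1E (μ ν : Measure ℝ) : W1 μ ν = W1E μ ν := rfl

lemma nonempty_coupling {α : Type*} [MeasurableSpace α] (μ ν : Measure α)
    [IsProbabilityMeasure μ] [IsProbabilityMeasure ν] :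
    Nonempty {π : Measure (α × α) // π.map Prod.fst = μ ∧ π.map Prod.snd = ν} :=
  ⟨⟨μ.prod ν, by simp, by simp⟩⟩

lemma IsCompact.exists_abs_sub_le_add_mul_dist {E : Type*} [MetricSpace E] {U : Set E}
    (hU : IsCompact U) {g : E → ℝ} (hg : ContinuousOn g U) {η : ℝ} (hη : 0 < η) :
    ∃ K > 0, ∀ x ∈ U, ∀ y ∈ U, |g x - g y| ≤ η + K * dist x y := by
  obtain ⟨δ, hδ, hclose⟩ :=
    Metric.uniformContinuousOn_iff.mp (hU.uniformContinuousOn_of_continuous hg) η hη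
  obtain ⟨C, hC⟩ := hU.exists_bound_of_continuousOn hg
  refine ⟨(2 * |C| + 1) / δ, by positivity, fun x hx y hy => ?_⟩
  rcases lt_or_ge (dist x y) δ with hxy | hxy
  · have hgxy := hclose x hx y hy hxy
    rw [Real.dist_eq] at hgxy
    have : 0 ≤ (2 * |C| + 1) / δ * dist x y := by positivity
    linarith
  · have hfar : 2 * |C| + 1 ≤ (2 * |C| + 1) / δ * dist x y := by
      rw [div_mul_eq_mul_div, le_div_iff₀ hδ]
      exact mul_le_mul_of_nonneg_left hxy (by positivity)
    have hx' := (Real.norm_eq_abs _ ▸ hC x hx).trans (le_abs_self C)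
    have hy' := (Real.norm_eq_abs _ ▸ hC y hy).trans (le_abs_self C)
    linarith [abs_sub (g x) (g y)]

section Coupling

variable {E : Type*} [MeasurableSpace E] [MetricSpace E]

lemma W1E_nonneg (μ ν : Measure E) : 0 ≤ W1E μ ν :=
  Real.iInf_nonneg fun _ => integral_nonneg fun _ => dist_nonneg

lemma W1E_le_integral_dist {μ ν : Measure E} {π : Measure (E × E)}
    (h₁ : π.map Prod.fst = μ) (h₂ : π.map Prod.snd = ν) :
    W1E μ ν ≤ ∫ p, dist p.1 p.2 ∂π :=
  ciInf_le ⟨0, by rintro _ ⟨π, rfl⟩; exact integral_nonneg fun _ => dist_nonneg⟩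
    (⟨π, h₁, h₂⟩ : {π : Measure (E × E) // π.map Prod.fst = μ ∧ π.map Prod.snd = ν})

end Coupling

section SecondCountable

variable {E : Type*} [MeasurableSpace E] [MetricSpace E] [OpensMeasurableSpace E]
  [SecondCountableTopology E]

lemma W1E_self (μ : Measure E) [IsProbabilityMeasure μ] : W1E μ μ = 0 := by
  have hdiag : Measurable fun x : E => (x, x) := measurable_id.prodMk measurable_id
  refine le_antisymm ?_ (W1E_nonneg μ μ)
  calc W1E μ μ ≤ ∫ p, dist p.1 p.2 ∂(μ.map fun x => (x, x)) :=
        W1E_le_integral_dist (by simp [Measure.map_map measurable_fst hdiag, Function.comp_def])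
          (by simp [Measure.map_map measurable_snd hdiag, Function.comp_def])
    _ = 0 := by
        rw [integral_map hdiag.aemeasurable measurable_dist.aestronglyMeasurable]
        simp

lemma integrable_dist_of_ae_mem {Ω : Type*} [MeasurableSpace Ω] {Q : Measure Ω}
    [IsFiniteMeasure Q] {Y Z : Ω → E} (hY : AEMeasurable Y Q) (hZ : AEMeasurable Z Q)
    {U : Set E} (hU : Bornology.IsBounded U) (hYU : ∀ᵐ ω ∂Q, Y ω ∈ U)
    (hZU : ∀ᵐ ω ∂Q, Z ω ∈ U) : Integrable (fun ω => dist (Y ω) (Z ω)) Q := by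
  refine .of_bound (hY.dist hZ).aestronglyMeasurable (Metric.diam U) ?_
  filter_upwards [hYU, hZU] with ω hYω hZω
  rw [Real.norm_of_nonneg dist_nonneg]
  exact Metric.dist_le_diam_of_mem hU hYω hZω

lemma W1E_map_le_integral_dist {Ω : Type*} [MeasurableSpace Ω] (Q : Measure Ω)
    {Y Z : Ω → E} (hY : Measurable Y) (hZ : Measurable Z) :
    W1E (Q.map Y) (Q.map Z) ≤ ∫ ω, dist (Y ω) (Z ω) ∂Q := by
  have hYZ : Measurable fun ω => (Y ω, Z ω) := hY.prodMk hZ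
  calc W1E (Q.map Y) (Q.map Z) ≤ ∫ p, dist p.1 p.2 ∂(Q.map fun ω => (Y ω, Z ω)) :=
        W1E_le_integral_dist (by rw [Measure.map_map measurable_fst hYZ]; rfl)
          (by rw [Measure.map_map measurable_snd hYZ]; rfl)
    _ = ∫ ω, dist (Y ω) (Z ω) ∂Q :=
        integral_map hYZ.aemeasurable measurable_dist.aestronglyMeasurable

lemma integral_abs_sub_le_of_ae_mem {π : Measure (E × E)} [IsProbabilityMeasure π]
    {U : Set E} (hU : Bornology.IsBounded U) (hπU : ∀ᵐ p ∂π, p.1 ∈ U ∧ p.2 ∈ U)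
    {g : E → ℝ} {η K : ℝ} (hg : ∀ x ∈ U, ∀ y ∈ U, |g x - g y| ≤ η + K * dist x y) :
    ∫ p, |g p.1 - g p.2| ∂π ≤ η + K * ∫ p, dist p.1 p.2 ∂π := by
  have hdist : Integrable (fun p : E × E => dist p.1 p.2) π :=
    integrable_dist_of_ae_mem measurable_fst.aemeasurable measurable_snd.aemeasurable hU
      (hπU.mono fun _ h => h.1) (hπU.mono fun _ h => h.2)
  calc ∫ p, |g p.1 - g p.2| ∂π ≤ ∫ p, η + K * dist p.1 p.2 ∂π :=
        integral_mono_of_nonneg (.of_forall fun _ => abs_nonneg _)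
          ((integrable_const η).add (hdist.const_mul K))
          (hπU.mono fun p hp => hg _ hp.1 _ hp.2)
    _ = η + K * ∫ p, dist p.1 p.2 ∂π := by
        rw [integral_add (integrable_const η) (hdist.const_mul K), integral_const,
          integral_const_mul, probReal_univ, one_smul]

lemma W1_map_le_add_mul_W1E {μ ν : Measure E} [IsProbabilityMeasure μ] [IsProbabilityMeasure ν]
    {U : Set E} (hU : Bornology.IsBounded U) (hμU : ∀ᵐ x ∂μ, x ∈ U) (hνU : ∀ᵐ x ∂ν, x ∈ U)
    {g : E → ℝ} (hgm : Measurable g) {η K : ℝ} (hK : 0 < K)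
    (hg : ∀ x ∈ U, ∀ y ∈ U, |g x - g y| ≤ η + K * dist x y) :
    W1 (μ.map g) (ν.map g) ≤ η + K * W1E μ ν := by
  have := nonempty_coupling μ ν
  -- dividing by `K` turns the bound into a lower bound for the costs, which `le_ciInf` accepts
  suffices (W1 (μ.map g) (ν.map g) - η) / K ≤ W1E μ ν by
    rw [div_le_iff₀ hK] at this; linarith
  refine le_ciInf fun ⟨π, h₁, h₂⟩ => ?_
  have : IsProbabilityMeasure (π.map Prod.fst) := h₁ ▸ inferInstance
  have : IsProbabilityMeasure π := Measure.isProbabilityMeasure_of_map Prod.fst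
  have hgg : Measurable (Prod.map g g) := hgm.prodMap hgm
  have hπU : ∀ᵐ p ∂π, p.1 ∈ U ∧ p.2 ∈ U :=
    (ae_of_ae_map measurable_fst.aemeasurable (h₁ ▸ hμU)).and
      (ae_of_ae_map measurable_snd.aemeasurable (h₂ ▸ hνU))
  have hcost : W1 (μ.map g) (ν.map g) ≤ ∫ p, |g p.1 - g p.2| ∂π := by
    rw [W1_eq_W1E]
    calc W1E (μ.map g) (ν.map g) ≤ ∫ p, dist p.1 p.2 ∂(π.map (Prod.map g g)) :=
          W1E_le_integral_dist
            (by rw [Measure.map_map measurable_fst hgg, ← h₁, Measure.map_map hgm measurable_fst]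
                rfl)
            (by rw [Measure.map_map measurable_snd hgg, ← h₂, Measure.map_map hgm measurable_snd]
                rfl)
      _ = ∫ p, |g p.1 - g p.2| ∂π :=
          integral_map hgg.aemeasurable measurable_dist.aestronglyMeasurable
  rw [div_le_iff₀ hK]
  linarith [integral_abs_sub_le_of_ae_mem hU hπU hg]

end SecondCountable

lemma abs_integral_sub_le_W1 {ν₀ ν₁ : Measure ℝ} [IsProbabilityMeasure ν₀] [IsProbabilityMeasure ν₁]
    (h₀ : Integrable id ν₀) (h₁ : Integrable id ν₁) :
    |∫ x, x ∂ν₀ - ∫ x, x ∂ν₁| ≤ W1 ν₀ ν₁ := by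
  have := nonempty_coupling ν₀ ν₁
  refine le_ciInf fun ⟨π, hπ₀, hπ₁⟩ => ?_
  have hfst : Integrable Prod.fst π := by
    rw [← hπ₀] at h₀
    exact (integrable_map_measure aestronglyMeasurable_id measurable_fst.aemeasurable).mp h₀
  have hsnd : Integrable Prod.snd π := by
    rw [← hπ₁] at h₁
    exact (integrable_map_measure aestronglyMeasurable_id measurable_snd.aemeasurable).mp h₁
  calc |∫ x, x ∂ν₀ - ∫ x, x ∂ν₁| = |∫ p, p.1 - p.2 ∂π| := by
        rw [integral_sub hfst hsnd, ← hπ₀, ← hπ₁,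
          integral_map (f := fun x => x) measurable_fst.aemeasurable aestronglyMeasurable_id,
          integral_map (f := fun x => x) measurable_snd.aemeasurable aestronglyMeasurable_id]
    _ ≤ ∫ p, |p.1 - p.2| ∂π := abs_integral_le_integral_abs

lemma integral_cond_le {Ω : Type*} [MeasurableSpace Ω] (P : Measure Ω) (s : Set Ω)
    {h : Ω → ℝ} (hint : Integrable h P) (hnn : 0 ≤ᵐ[P] h) :
    ∫ ω, h ω ∂(P[|s]) ≤ (P s)⁻¹.toReal * ∫ ω, h ω ∂P := by
  rw [ProbabilityTheory.cond, integral_smul_measure, smul_eq_mul]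
  exact mul_le_mul_of_nonneg_left
    (integral_mono_measure Measure.restrict_le_self hnn hint) ENNReal.toReal_nonneg

section Limits

open scoped BoundedContinuousFunction

variable {ι E : Type*} {l : Filter ι} [MeasurableSpace E] [MetricSpace E]
  [OpensMeasurableSpace E] [SecondCountableTopology E]

lemma tendsto_W1_map_of_tendsto_W1E {μ ν : ι → Measure E} {U : Set E} (hU : IsCompact U)
    (hμ : ∀ᶠ i in l, IsProbabilityMeasure (μ i)) (hν : ∀ᶠ i in l, IsProbabilityMeasure (ν i))
    (hμU : ∀ᶠ i in l, ∀ᵐ x ∂μ i, x ∈ U) (hνU : ∀ᶠ i in l, ∀ᵐ x ∂ν i, x ∈ U)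
    {g : E → ℝ} (hgm : Measurable g) (hg : ContinuousOn g U)
    (h : Tendsto (fun i => W1E (μ i) (ν i)) l (𝓝 0)) :
    Tendsto (fun i => W1 ((μ i).map g) ((ν i).map g)) l (𝓝 0) := by
  refine Metric.tendsto_nhds.mpr fun t ht => ?_
  obtain ⟨K, hK, hgK⟩ := hU.exists_abs_sub_le_add_mul_dist hg (half_pos ht)
  filter_upwards [hμ, hν, hμU, hνU, Metric.tendsto_nhds.mp h (t / 2 / K) (by positivity)]
    with i hμi hνi hμUi hνUi hWi
  rw [Real.dist_0_eq_abs, abs_of_nonneg (W1E_nonneg (μ i) (ν i))] at hWi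
  rw [Real.dist_0_eq_abs, abs_of_nonneg (W1_eq_W1E _ _ ▸ W1E_nonneg _ _)]
  calc W1 ((μ i).map g) ((ν i).map g) ≤ t / 2 + K * W1E (μ i) (ν i) :=
        W1_map_le_add_mul_W1E hU.isBounded hμUi hνUi hgm hK hgK
    _ < t / 2 + K * (t / 2 / K) := by gcongr
    _ = t := by field_simp; ring

lemma tendsto_integral_sub_of_tendsto_W1E {μ ν : ι → Measure E} {U : Set E} (hU : IsCompact U)
    (hμ : ∀ᶠ i in l, IsProbabilityMeasure (μ i)) (hν : ∀ᶠ i in l, IsProbabilityMeasure (ν i))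
    (hμU : ∀ᶠ i in l, ∀ᵐ x ∂μ i, x ∈ U) (hνU : ∀ᶠ i in l, ∀ᵐ x ∂ν i, x ∈ U) (g : E →ᵇ ℝ)
    (h : Tendsto (fun i => W1E (μ i) (ν i)) l (𝓝 0)) :
    Tendsto (fun i => ∫ x, g x ∂μ i - ∫ x, g x ∂ν i) l (𝓝 0) := by
  have hgm : Measurable g := g.continuous.measurable
  have hintegral (ρ : Measure E) : ∫ x, g x ∂ρ = ∫ y, y ∂(ρ.map g) :=
    (integral_map hgm.aemeasurable aestronglyMeasurable_id).symm
  have hintegrable (ρ : Measure E) [IsProbabilityMeasure ρ] : Integrable id (ρ.map g) :=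
    (integrable_map_measure aestronglyMeasurable_id hgm.aemeasurable).mpr (g.integrable ρ)
  refine squeeze_zero_norm' ?_
    (tendsto_W1_map_of_tendsto_W1E hU hμ hν hμU hνU hgm g.continuous.continuousOn h)
  filter_upwards [hμ, hν] with i hμi hνi
  have := Measure.isProbabilityMeasure_map (μ := μ i) hgm.aemeasurable
  have := Measure.isProbabilityMeasure_map (μ := ν i) hgm.aemeasurable
  rw [Real.norm_eq_abs, hintegral, hintegral]
  exact abs_integral_sub_le_W1 (hintegrable _) (hintegrable _)

lemma tendsto_W1E_map_cond {Ω : Type*} [MeasurableSpace Ω] {P : Measure Ω} [IsFiniteMeasure P]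
    (s : Set Ω) {X : Ω → E} {Y : ι → Ω → E} {U : Set E} (hU : Bornology.IsBounded U)
    (hX : Measurable X) (hY : ∀ᶠ i in l, Measurable (Y i)) (hXU : ∀ᵐ ω ∂P, X ω ∈ U)
    (hYU : ∀ᶠ i in l, ∀ᵐ ω ∂P, Y i ω ∈ U)
    (h : Tendsto (fun i => ∫ ω, dist (Y i ω) (X ω) ∂P) l (𝓝 0)) :
    Tendsto (fun i => W1E ((P[|s]).map X) ((P[|s]).map (Y i))) l (𝓝 0) := by
  refine squeeze_zero' (.of_forall fun _ => W1E_nonneg _ _) ?_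
    (by simpa only [mul_zero] using h.const_mul (P s)⁻¹.toReal)
  filter_upwards [hY, hYU] with i hYi hYUi
  calc W1E ((P[|s]).map X) ((P[|s]).map (Y i)) ≤ ∫ ω, dist (X ω) (Y i ω) ∂(P[|s]) :=
        W1E_map_le_integral_dist _ hX hYi
    _ = ∫ ω, dist (Y i ω) (X ω) ∂(P[|s]) := by simp_rw [dist_comm]
    _ ≤ (P s)⁻¹.toReal * ∫ ω, dist (Y i ω) (X ω) ∂P :=
        integral_cond_le P s
          (integrable_dist_of_ae_mem hYi.aemeasurable hX.aemeasurable hU hYUi hXU)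
          (.of_forall fun _ => dist_nonneg)

lemma eq_of_tendsto_W1E [BorelSpace E] [l.NeBot] {μ₀ μ₁ : Measure E}
    [IsProbabilityMeasure μ₀] [IsProbabilityMeasure μ₁] {ν₀ ν₁ : ι → Measure E} {U : Set E}
    (hU : IsCompact U) (hμ₀U : ∀ᵐ x ∂μ₀, x ∈ U) (hμ₁U : ∀ᵐ x ∂μ₁, x ∈ U)
    (hν₀ : ∀ᶠ i in l, IsProbabilityMeasure (ν₀ i)) (hν₁ : ∀ᶠ i in l, IsProbabilityMeasure (ν₁ i))
    (hν₀U : ∀ᶠ i in l, ∀ᵐ x ∂ν₀ i, x ∈ U) (hν₁U : ∀ᶠ i in l, ∀ᵐ x ∂ν₁ i, x ∈ U)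
    (h₀ : Tendsto (fun i => W1E μ₀ (ν₀ i)) l (𝓝 0))
    (h₁ : Tendsto (fun i => W1E μ₁ (ν₁ i)) l (𝓝 0))
    (h : Tendsto (fun i => W1E (ν₀ i) (ν₁ i)) l (𝓝 0)) : μ₀ = μ₁ := by
  refine ext_of_forall_integral_eq_of_IsFiniteMeasure fun g => ?_
  have t₀ := tendsto_integral_sub_of_tendsto_W1E hU (.of_forall fun _ => inferInstance) hν₀
    (.of_forall fun _ => hμ₀U) hν₀U g h₀
  have t₁ := tendsto_integral_sub_of_tendsto_W1E hU (.of_forall fun _ => inferInstance) hν₁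
    (.of_forall fun _ => hμ₁U) hν₁U g h₁
  have t := tendsto_integral_sub_of_tendsto_W1E hU hν₀ hν₁ hν₀U hν₁U g h
  have hsum := (t₀.add t).sub t₁
  simp only [add_zero, sub_zero, sub_add_sub_cancel, sub_sub_sub_cancel_right] at hsum
  exact sub_eq_zero.mp (tendsto_const_nhds_iff.mp hsum)

end Limits

theorem stmt9_general {Ω : Type*} [MeasurableSpace Ω] (P : Measure Ω) [IsProbabilityMeasure P]
    {n : ℕ} (Xe : ℝ → Ω → EuclideanSpace ℝ (Fin n)) (X : Ω → EuclideanSpace ℝ (Fin n))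
    (G : Ω → Fin 2) (U : Set (EuclideanSpace ℝ (Fin n))) (hU : IsCompact U)
    (f : EuclideanSpace ℝ (Fin n) → ℝ)
    (hXe : ∀ ε ∈ Ioi (0:ℝ), Measurable (Xe ε)) (hX : Measurable X)
    (hfm : Measurable f) (hf : ContinuousOn f U)
    (hXeU : ∀ ε ∈ Ioi (0:ℝ), ∀ᵐ ω ∂P, Xe ε ω ∈ U) (hXU : ∀ᵐ ω ∂P, X ω ∈ U)
    (hpos : ∀ k : Fin 2, P (G ⁻¹' {k}) ≠ 0)
    (hL1 : Tendsto (fun ε => ∫ ω, dist (Xe ε ω) (X ω) ∂P)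
      (nhdsWithin 0 (Ioi 0)) (nhds 0))
    (hbias : Tendsto (fun ε =>
        W1E (Measure.map (Xe ε) (ProbabilityTheory.cond P (G ⁻¹' {0})))
            (Measure.map (Xe ε) (ProbabilityTheory.cond P (G ⁻¹' {1}))))
      (nhdsWithin 0 (Ioi 0)) (nhds 0)) :
    Tendsto (fun ε =>
        W1 (Measure.map (fun ω => f (Xe ε ω)) (ProbabilityTheory.cond P (G ⁻¹' {0})))
           (Measure.map (fun ω => f (Xe ε ω)) (ProbabilityTheory.cond P (G ⁻¹' {1}))))
      (nhdsWithin 0 (Ioi 0)) (nhds 0) ∧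
    W1 (Measure.map (fun ω => f (X ω)) (ProbabilityTheory.cond P (G ⁻¹' {0})))
       (Measure.map (fun ω => f (X ω)) (ProbabilityTheory.cond P (G ⁻¹' {1}))) = 0 := by
  have hcond (k : Fin 2) : IsProbabilityMeasure (P[|G ⁻¹' {k}]) :=
    cond_isProbabilityMeasure (hpos k)
  have hlawU {Y : Ω → EuclideanSpace ℝ (Fin n)} (hY : Measurable Y) (hYU : ∀ᵐ ω ∂P, Y ω ∈ U)
      (k : Fin 2) : ∀ᵐ x ∂(P[|G ⁻¹' {k}]).map Y, x ∈ U :=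
    (ae_map_iff hY.aemeasurable hU.isClosed.measurableSet).mpr
      (cond_absolutelyContinuous.ae_le hYU)
  have hXe' : ∀ᶠ ε in 𝓝[>] 0, Measurable (Xe ε) := eventually_nhdsWithin_of_forall hXe
  have hXeU' : ∀ᶠ ε in 𝓝[>] 0, ∀ᵐ ω ∂P, Xe ε ω ∈ U := eventually_nhdsWithin_of_forall hXeU
  have hlawXe (k : Fin 2) :
      ∀ᶠ ε in 𝓝[>] 0, IsProbabilityMeasure ((P[|G ⁻¹' {k}]).map (Xe ε)) :=
    hXe'.mono fun _ hm => Measure.isProbabilityMeasure_map hm.aemeasurable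
  have hlawXeU (k : Fin 2) : ∀ᶠ ε in 𝓝[>] 0, ∀ᵐ x ∂(P[|G ⁻¹' {k}]).map (Xe ε), x ∈ U :=
    eventually_nhdsWithin_of_forall fun ε hε => hlawU (hXe ε hε) (hXeU ε hε) k
  have hlawX (k : Fin 2) : IsProbabilityMeasure ((P[|G ⁻¹' {k}]).map X) :=
    Measure.isProbabilityMeasure_map hX.aemeasurable
  have hconv (k : Fin 2) := tendsto_W1E_map_cond (G ⁻¹' {k}) hU.isBounded hX hXe' hXU hXeU' hL1
  have hXlaw : (P[|G ⁻¹' {0}]).map X = (P[|G ⁻¹' {1}]).map X :=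
    eq_of_tendsto_W1E hU (hlawU hX hXU 0) (hlawU hX hXU 1) (hlawXe 0) (hlawXe 1)
      (hlawXeU 0) (hlawXeU 1) (hconv 0) (hconv 1) hbias
  refine ⟨?_, ?_⟩
  · refine (tendsto_W1_map_of_tendsto_W1E hU (hlawXe 0) (hlawXe 1) (hlawXeU 0) (hlawXeU 1)
      hfm hf hbias).congr' ?_
    filter_upwards [hXe'] with ε hm
    rw [Measure.map_map hfm hm, Measure.map_map hfm hm]
    rfl
  · have hcomp (k : Fin 2) :
        (P[|G ⁻¹' {k}]).map (fun ω => f (X ω)) = ((P[|G ⁻¹' {k}]).map X).map f :=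
      (Measure.map_map hfm hX).symm
    have := Measure.isProbabilityMeasure_map (μ := (P[|G ⁻¹' {1}]).map X) hfm.aemeasurable
    rw [hcomp, hcomp, hXlaw, W1_eq_W1E, W1E_self]

theorem stmt9 {Ω : Type*} [MeasurableSpace Ω] (P : Measure Ω) [IsProbabilityMeasure P]
    {n : ℕ} (Xe : ℝ → Ω → EuclideanSpace ℝ (Fin n)) (X : Ω → EuclideanSpace ℝ (Fin n))
    (G : Ω → Fin 2) (U : Set (EuclideanSpace ℝ (Fin n))) (hU : IsCompact U)
    (f : EuclideanSpace ℝ (Fin n) → ℝ)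
    (hXe : ∀ ε ∈ Ioi (0:ℝ), Measurable (Xe ε)) (hX : Measurable X) (hG : Measurable G)
    (hfm : Measurable f) (hf : ContinuousOn f U) (hfb : ∃ Cb, ∀ x ∈ U, |f x| ≤ Cb)
    (hXeint : ∀ ε ∈ Ioi (0:ℝ), Integrable (Xe ε) P) (hXint : Integrable X P)
    (hXeU : ∀ ε ∈ Ioi (0:ℝ), ∀ᵐ ω ∂P, Xe ε ω ∈ U) (hXU : ∀ᵐ ω ∂P, X ω ∈ U)
    (hpos : ∀ k : Fin 2, P (G ⁻¹' {k}) ≠ 0)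
    (hL1 : Tendsto (fun ε => ∫ ω, dist (Xe ε ω) (X ω) ∂P)
      (nhdsWithin 0 (Ioi 0)) (nhds 0))
    (hbias : Tendsto (fun ε =>
        W1E (Measure.map (Xe ε) (ProbabilityTheory.cond P (G ⁻¹' {0})))
            (Measure.map (Xe ε) (ProbabilityTheory.cond P (G ⁻¹' {1}))))
      (nhdsWithin 0 (Ioi 0)) (nhds 0)) :
    Tendsto (fun ε =>
        W1 (Measure.map (fun ω => f (Xe ε ω)) (ProbabilityTheory.cond P (G ⁻¹' {0})))
           (Measure.map (fun ω => f (Xe ε ω)) (ProbabilityTheory.cond P (G ⁻¹' {1}))))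
      (nhdsWithin 0 (Ioi 0)) (nhds 0) ∧
    W1 (Measure.map (fun ω => f (X ω)) (ProbabilityTheory.cond P (G ⁻¹' {0})))
       (Measure.map (fun ω => f (X ω)) (ProbabilityTheory.cond P (G ⁻¹' {1}))) = 0 :=
  stmt9_general P Xe X G U hU f hXe hX hfm hf hXeU hXU hpos hL1 hbias
end
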